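/- For every integer n ≥ 1, T_{n+1}(x) = x · ∑_{k=0}^{n} C(n,k) T_k(x) B_{n−k}(x²), where C(n,k) is the binomial coefficient and B_m is the type B Eulerian polynomial, as an identity of polynomials. -/

import Mathlib

/-- The numbers T(n,k) defined by T(1,1) = 1, T(1,k) = 0 for k ≠ 1, and the
recurrence T(n+1,k) = k·T(n,k) + T(n,k-1) + (2n-k+2)·T(n,k-2) for n ≥ 1.
(The value at n = 0 encodes T_0(x) = 1.) -/
def Tc : ℕ → ℤ → ℤ
  | 0, k => if k = 0 then 1 else 0
  | 1, k => if k = 1 then 1 else 0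
  | (n+2), k => k * Tc (n+1) k + Tc (n+1) (k-1) + (2*((n : ℤ)+1) - k + 2) * Tc (n+1) (k-2)

/-- The polynomial T_n(x) = ∑_(k=1)^(2n-1) T(n,k) x^k for n ≥ 1, with T_0(x) = 1. -/
noncomputable def Tpoly (n : ℕ) : Polynomial ℤ :=
  if n = 0 then 1 else ∑ k ∈ Finset.Icc 1 (2*n - 1), Polynomial.C (Tc n k) * Polynomial.X ^ k

/-- The type B Eulerian numbers: B(0,0) = 1, B(0,k) = 0 for k ≠ 0, and
B(n,k) = (2k+1)·B(n-1,k) + (2n-2k+1)·B(n-1,k-1) for n ≥ 1. -/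
def Bc : ℕ → ℤ → ℤ
  | 0, k => if k = 0 then 1 else 0
  | (n+1), k => (2*k+1) * Bc n k + (2*((n : ℤ)+1) - 2*k + 1) * Bc n (k-1)

/-- The type B Eulerian polynomial B_n(x) = ∑_(k=0)^(n) B(n,k) x^k. -/
noncomputable def Bpoly (n : ℕ) : Polynomial ℤ :=
  ∑ k ∈ Finset.range (n+1), Polynomial.C (Bc n k) * Polynomial.X ^ k

/-!
Write `θ = x d/dx`. The recurrence for `T(n,k)` reads `T_{n+1} = (1 - x²) θ T_n + (x + 2n x²) T_n`,
and the one for `B(n,k)` gives, for `Q_n(x) = B_n(x²)`,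
`Q_{n+1} = (1 - x²) θ Q_n + (1 + (2n+1) x²) Q_n`. Both are recurrences
`y_{k+1} = δ y_k + (γ + k u) y_k` along the derivation `δ = (1 - x²) θ` with the same increment
`u = 2x²`, so by the Leibniz and Pascal rules `S_n = ∑ C(n,k) T_k Q_{n-k}` satisfies
`S_{n+1} = δ S_n + (1 + x + (2n+1) x²) S_n`. As `δ (x S) = x (δ S + (1 - x²) S)`, this is exactly
the recurrence `x S_n` inherits from that of `T_{n+1}`, and both equal `x` at `n = 0`.
-/

open Polynomial Finset

section BinomialConvolution

variable {R A : Type*} [CommSemiring R] [CommSemiring A] [Algebra R A]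

def binomialConvolution (a b : ℕ → A) (n : ℕ) : A :=
  ∑ k ∈ range (n + 1), (n.choose k : A) * a k * b (n - k)

theorem binomialConvolution_succ (δ : Derivation R A A) {a b : ℕ → A} {α β u : A}
    (ha : ∀ k, a (k + 1) = δ (a k) + (α + k * u) * a k)
    (hb : ∀ k, b (k + 1) = δ (b k) + (β + k * u) * b k) (n : ℕ) :
    binomialConvolution a b (n + 1) =
      δ (binomialConvolution a b n) + (α + β + n * u) * binomialConvolution a b n := by
  have hterm : ∀ k ∈ range (n + 1),
      (n.choose k : A) * (a k * b (n + 1 - k) + a (k + 1) * b (n - k)) =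
        δ ((n.choose k : A) * (a k * b (n - k))) +
          (α + β + n * u) * ((n.choose k : A) * (a k * b (n - k))) := by
    intro k hk
    have hkn : k ≤ n := Nat.lt_succ_iff.mp (mem_range.mp hk)
    have hu : (k : A) * u + ((n - k : ℕ) : A) * u = n * u := by
      rw [← add_mul, ← Nat.cast_add, Nat.add_sub_cancel' hkn]
    rw [Nat.succ_sub hkn, ha, hb, δ.leibniz, δ.map_natCast, δ.leibniz, ← hu]
    simp only [smul_eq_mul, mul_zero, add_zero]
    ring
  unfold binomialConvolution
  simp only [mul_assoc]
  rw [Finset.sum_choose_succ_mul (fun i j => a i * b j), ← sum_add_distrib, map_sum, mul_sum,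
    ← sum_add_distrib]
  simp only [← mul_add]
  exact sum_congr rfl hterm

end BinomialConvolution

/-- `f` extends the coefficients of `p` by zero to negative indices, so that shifted coefficients
need no case split. -/
theorem Polynomial.coeff_X_pow_mul_of_coeff_eq {R : Type*} [Semiring R] {p : R[X]} {f : ℤ → R}
    (hf : ∀ j < 0, f j = 0) (hp : ∀ k : ℕ, p.coeff k = f k) (i k : ℕ) :
    (X ^ i * p).coeff k = f (k - i) := by
  rw [coeff_X_pow_mul']
  split_ifs with h
  · rw [hp, Nat.cast_sub h]
  · rw [hf _ (by omega)]

theorem Polynomial.coeff_X_mul_derivative {R : Type*} [Semiring R] (p : R[X]) (k : ℕ) :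
    (X * derivative p).coeff k = k * p.coeff k := by
  rcases k with _ | k
  · simp
  · rw [coeff_X_mul, coeff_derivative, ← Nat.cast_succ, Nat.cast_comm]

theorem Tc_succ_eq_zero (n : ℕ) {k : ℤ} (hk : k ≤ 0 ∨ 2 * (n + 1) ≤ k) : Tc (n + 1) k = 0 := by
  induction n generalizing k with
  | zero => simp [Tc]; omega
  | succ n ih =>
    rw [Tc, ih (by omega), ih (by omega), ih (by push_cast at hk ⊢; omega)]
    ring

theorem Tc_eq_zero_of_neg (n : ℕ) {k : ℤ} (hk : k < 0) : Tc n k = 0 := by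
  rcases n with _ | n
  · simp [Tc]; omega
  · exact Tc_succ_eq_zero n (by omega)

theorem Bc_eq_zero (n : ℕ) {k : ℤ} (hk : k < 0 ∨ n < k) : Bc n k = 0 := by
  induction n generalizing k with
  | zero => simp [Bc]; omega
  | succ n ih =>
    rw [Bc, ih (by push_cast at hk ⊢; omega), ih (by push_cast at hk ⊢; omega)]
    ring

theorem coeff_Tpoly (n k : ℕ) : (Tpoly n).coeff k = Tc n k := by
  rcases n with _ | n
  · by_cases hk : k = 0 <;> simp [Tpoly, Tc, coeff_one, hk]
  · simp only [Tpoly, if_neg n.succ_ne_zero, finsetSum_coeff, coeff_C_mul_X_pow, sum_ite_eq]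
    split_ifs with hk
    · rfl
    · rw [mem_Icc] at hk
      rw [Tc_succ_eq_zero n (by omega)]

theorem coeff_Bpoly (n k : ℕ) : (Bpoly n).coeff k = Bc n k := by
  simp only [Bpoly, finsetSum_coeff, coeff_C_mul_X_pow, sum_ite_eq]
  split_ifs with hk
  · rfl
  · rw [mem_range] at hk
    rw [Bc_eq_zero n (by omega)]

theorem Tpoly_zero : Tpoly 0 = 1 := if_pos rfl

theorem Tpoly_one : Tpoly 1 = X := by
  ext k
  rw [coeff_Tpoly, coeff_X]
  simp [Tc, eq_comm]

theorem Bpoly_zero : Bpoly 0 = 1 := by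
  simp [Bpoly, Bc]

theorem Tpoly_succ (n : ℕ) :
    Tpoly (n + 1) =
      (1 - X ^ 2) * (X * derivative (Tpoly n)) + (X + 2 * (n : ℤ[X]) * X ^ 2) * Tpoly n := by
  rcases n with _ | n
  · simp [Tpoly_one, Tpoly_zero]
  have hT :=
    coeff_X_pow_mul_of_coeff_eq (fun _ => Tc_eq_zero_of_neg (n + 1)) (coeff_Tpoly (n + 1))
  have hDT := coeff_X_pow_mul_of_coeff_eq (p := X * derivative (Tpoly (n + 1)))
    (f := fun j => j * Tc (n + 1) j)
    (fun j hj => by rw [Tc_eq_zero_of_neg _ hj, mul_zero])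
    (fun k => by rw [coeff_X_mul_derivative, coeff_Tpoly])
  have hsplit : (1 - X ^ 2) * (X * derivative (Tpoly (n + 1))) +
      (X + 2 * ((n + 1 : ℕ) : ℤ[X]) * X ^ 2) * Tpoly (n + 1) =
      X ^ 0 * (X * derivative (Tpoly (n + 1))) - X ^ 2 * (X * derivative (Tpoly (n + 1))) +
        X ^ 1 * Tpoly (n + 1) + C (2 * (n + 1 : ℤ)) * (X ^ 2 * Tpoly (n + 1)) := by
    simp only [map_mul, map_add, map_natCast, map_one, map_ofNat]
    push_cast
    ring
  ext k
  rw [hsplit, coeff_Tpoly, Tc]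
  simp only [coeff_add, coeff_sub, coeff_C_mul, hT, hDT, Nat.cast_zero, Nat.cast_one,
    Nat.cast_ofNat, sub_zero]
  ring

theorem Bpoly_succ (n : ℕ) :
    Bpoly (n + 1) =
      2 * (1 - X) * (X * derivative (Bpoly n)) + (1 + (2 * (n : ℤ[X]) + 1) * X) * Bpoly n := by
  have hB := coeff_X_pow_mul_of_coeff_eq (fun _ hj => Bc_eq_zero n (.inl hj)) (coeff_Bpoly n)
  have hDB := coeff_X_pow_mul_of_coeff_eq (p := X * derivative (Bpoly n))
    (f := fun j => j * Bc n j)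
    (fun j hj => by rw [Bc_eq_zero n (.inl hj), mul_zero])
    (fun k => by rw [coeff_X_mul_derivative, coeff_Bpoly])
  have hsplit :
      2 * (1 - X) * (X * derivative (Bpoly n)) + (1 + (2 * (n : ℤ[X]) + 1) * X) * Bpoly n =
      C 2 * (X ^ 0 * (X * derivative (Bpoly n))) - C 2 * (X ^ 1 * (X * derivative (Bpoly n))) +
        X ^ 0 * Bpoly n + C (2 * (n : ℤ) + 1) * (X ^ 1 * Bpoly n) := by
    simp only [map_mul, map_add, map_natCast, map_one, map_ofNat]
    ring
  ext k
  rw [hsplit, coeff_Bpoly, Bc]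
  simp only [coeff_add, coeff_sub, coeff_C_mul, hB, hDB, Nat.cast_zero, Nat.cast_one, sub_zero]
  ring

theorem X_mul_derivative_comp_X_sq {R : Type*} [CommSemiring R] (p : R[X]) :
    X * derivative (p.comp (X ^ 2)) = 2 * (X * derivative p).comp (X ^ 2) := by
  simp only [derivative_comp, derivative_X_pow, mul_comp, X_comp, Nat.cast_ofNat, map_ofNat,
    Nat.add_one_sub_one, pow_one]
  ring

theorem Bpoly_comp_X_sq_succ (n : ℕ) :
    (Bpoly (n + 1)).comp (X ^ 2) =
      (1 - X ^ 2) * (X * derivative ((Bpoly n).comp (X ^ 2))) +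
        (1 + (2 * (n : ℤ[X]) + 1) * X ^ 2) * (Bpoly n).comp (X ^ 2) := by
  rw [Bpoly_succ, X_mul_derivative_comp_X_sq]
  simp only [add_comp, mul_comp, sub_comp, one_comp, X_comp, natCast_comp, ofNat_comp]
  ring

theorem stmt11_general (n : ℕ) :
    Tpoly (n+1) = Polynomial.X * ∑ k ∈ Finset.range (n+1),
      Polynomial.C ((n.choose k : ℤ)) * Tpoly k
        * ((Bpoly (n-k)).comp (Polynomial.X ^ 2)) := by
  let δ : Derivation ℤ ℤ[X] ℤ[X] := ((1 - X ^ 2 : ℤ[X]) * X) • derivative'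
  have hδ (p : ℤ[X]) : δ p = (1 - X ^ 2) * (X * derivative p) := by
    simp [δ, mul_assoc]
  have hT (k : ℕ) : Tpoly (k + 1) = δ (Tpoly k) + (X + (k : ℤ[X]) * (2 * X ^ 2)) * Tpoly k := by
    rw [Tpoly_succ, hδ]
    ring
  have hQ (k : ℕ) : (Bpoly (k + 1)).comp (X ^ 2) =
      δ ((Bpoly k).comp (X ^ 2)) +
        (1 + X ^ 2 + (k : ℤ[X]) * (2 * X ^ 2)) * (Bpoly k).comp (X ^ 2) := by
    rw [Bpoly_comp_X_sq_succ, hδ]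
    ring
  simp only [map_natCast]
  change Tpoly (n + 1) = X * binomialConvolution Tpoly (fun m => (Bpoly m).comp (X ^ 2)) n
  induction n with
  | zero => simp [binomialConvolution, Tpoly_one, Tpoly_zero, Bpoly_zero]
  | succ n ih =>
    rw [Tpoly_succ, ih, binomialConvolution_succ δ hT hQ, hδ, derivative_mul, derivative_X]
    push_cast
    ring

/-- For n ≥ 1, T_(n+1)(x) = x · ∑_(k=0)^(n) C(n,k) T_k(x) B_(n-k)(x²). -/
theorem stmt11 (n : ℕ) (hn : 1 ≤ n) :
    Tpoly (n+1) = Polynomial.X * ∑ k ∈ Finset.range (n+1),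
      Polynomial.C ((n.choose k : ℤ)) * Tpoly k
        * ((Bpoly (n-k)).comp (Polynomial.X ^ 2)) :=
  stmt11_general n
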